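/- arXiv:1103.5020 — 13 statements merged into one kernel-verified Lean document; each statement's English description precedes it below -/
import Mathlib

section
/- Let k be a field, A a unital associative k-algebra, u ∈ A, and let p = p_1^{m_1}···p_r^{m_r} ∈ k[x] be a monic annihilating polynomial of u whose monic irreducible factors p_1, …, p_r are pairwise distinct and separable. Set p̃ = p_1···p_r, p̄ = p/p̃ and m = max_{1≤j≤r} m_j, and let q ∈ k[x] satisfy q·p̃' ≡ 1 (mod p̄). Define a sequence in A by d_0 = u and d_{n+1} = d_n − p̃(d_n)·q(d_n) for n ≥ 0, and let N be the smallest integer with 2^N ≥ m. Then p̃(d_N) = 0 (so d_N is absolutely semisimple), u − d_N is nilpotent, d_N commutes with u − d_N, and (d_N, u − d_N) is the unique Jordan–Chevalley decomposition of u. -/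
/-!
Everything happens in the commutative subalgebra `k[u]`. Each step changes `d_n` by a multiple
of `p̃(d_n)`, hence of `p̃(u)`, so `p_i(u) ∣ p_i(d_n)` for every factor and `p(d_n) = 0` along
the whole sequence. By Taylor's formula
`p̃(d_{n+1}) = p̃(d_n) (1 - q(d_n) p̃'(d_n)) + p̃(d_n)² w`, and the first term is a multiple of
`p̃(d_n) p̄(d_n) = p(d_n) = 0`. Thus `p̃(u) ^ 2 ^ n ∣ p̃(d_n)`, which vanishes once `2 ^ n ≥ m`
because `p ∣ p̃ ^ m`.

For uniqueness: if `b` is a root of a separable polynomial, `f(b)` nilpotent forces `f(b) = 0`;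
and a nilpotent perturbation of a simple root of `f` cannot be another root of `f`.
-/

open Polynomial

/-- An element of a `k`-algebra is absolutely semisimple if it has a separable
annihilating polynomial. -/
def AbsSemisimple (k : Type*) [Field k] {A : Type*} [Ring A] [Algebra k A] (u : A) : Prop :=
  ∃ f : k[X], f.Separable ∧ aeval u f = 0

/-- A Jordan–Chevalley decomposition of `u` is a pair `(d, s)` with `d` absolutely
semisimple, `s` nilpotent, `u = d + s` and `d s = s d`. -/
def IsJordanChevalley (k : Type*) [Field k] {A : Type*} [Ring A] [Algebra k A]
    (u d s : A) : Prop :=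
  AbsSemisimple k d ∧ IsNilpotent s ∧ u = d + s ∧ d * s = s * d

section NewtonSeq

variable {k A B : Type*} [CommRing k] [Ring A] [Algebra k A] [Ring B] [Algebra k B]

noncomputable def newtonSeq (f q : k[X]) (x : A) : ℕ → A
  | 0 => x
  | n + 1 => newtonSeq f q x n - aeval (newtonSeq f q x n) f * aeval (newtonSeq f q x n) q

theorem eq_newtonSeq {f q : k[X]} {x : A} {d : ℕ → A} (h0 : d 0 = x)
    (hsucc : ∀ n, d (n + 1) = d n - aeval (d n) f * aeval (d n) q) :
    d = newtonSeq f q x := by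
  funext n
  induction n with
  | zero => exact h0
  | succ n ih => rw [hsucc, ih, newtonSeq]

theorem map_newtonSeq (φ : A →ₐ[k] B) (f q : k[X]) (x : A) (n : ℕ) :
    φ (newtonSeq f q x n) = newtonSeq f q (φ x) n := by
  induction n with
  | zero => rfl
  | succ n ih => simp only [newtonSeq, map_sub, map_mul, ← aeval_algHom_apply, ih]

end NewtonSeq

section CommRing

variable {k R : Type*} [CommRing k] [CommRing R] [Algebra k R]

theorem aeval_dvd_aeval_of_dvd_sub (f : k[X]) {x y : R} (h : aeval x f ∣ y - x) :
    aeval x f ∣ aeval y f := by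
  have hsub := sub_dvd_eval_sub y x (f.map (algebraMap k R))
  rw [eval_map_algebraMap, eval_map_algebraMap] at hsub
  simpa using dvd_add (h.trans hsub) (dvd_refl (aeval x f))

theorem aeval_prod_pow_dvd {ι : Type*} (s : Finset ι) (g : ι → k[X]) (e : ι → ℕ) {x y : R}
    (h : ∀ i ∈ s, aeval x (g i) ∣ y - x) :
    aeval x (∏ i ∈ s, g i ^ e i) ∣ aeval y (∏ i ∈ s, g i ^ e i) := by
  simp only [map_prod, map_pow]
  exact Finset.prod_dvd_prod_of_dvd _ _ fun i hi =>
    pow_dvd_pow_of_dvd (aeval_dvd_aeval_of_dvd_sub _ (h i hi)) _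

theorem exists_aeval_newton_step_eq_sq_mul {f g q : k[X]} (hq : g ∣ q * derivative f - 1)
    {x : R} (hx : aeval x (f * g) = 0) :
    ∃ w, aeval (x - aeval x f * aeval x q) f = aeval x f ^ 2 * w := by
  obtain ⟨c, hc⟩ := hq
  obtain ⟨w, hw⟩ := binomExpansion (f.map (algebraMap k R)) x (-(aeval x f * aeval x q))
  simp only [derivative_map, eval_map_algebraMap] at hw
  have hqc := congrArg (aeval x) hc
  simp only [map_sub, map_mul, map_one] at hqc hx
  refine ⟨aeval x q ^ 2 * w, ?_⟩
  rw [sub_eq_add_neg, hw]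
  linear_combination (-aeval x f) * hqc - aeval x c * hx

theorem aeval_dvd_newtonSeq_sub (f q : k[X]) (x : R) (n : ℕ) :
    aeval x f ∣ newtonSeq f q x n - x := by
  induction n with
  | zero => simp [newtonSeq]
  | succ n ih =>
    rw [newtonSeq, sub_right_comm]
    exact dvd_sub ih ((aeval_dvd_aeval_of_dvd_sub f ih).mul_right _)

theorem pow_two_pow_dvd_aeval_newtonSeq {f g q : k[X]} (hq : g ∣ q * derivative f - 1) {x : R}
    (hroot : ∀ n, aeval (newtonSeq f q x n) (f * g) = 0) (n : ℕ) :
    aeval x f ^ 2 ^ n ∣ aeval (newtonSeq f q x n) f := by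
  induction n with
  | zero => simp [newtonSeq]
  | succ n ih =>
    obtain ⟨w, hw⟩ := exists_aeval_newton_step_eq_sq_mul hq (hroot n)
    rw [newtonSeq, hw, pow_succ, pow_mul]
    exact (pow_dvd_pow_of_dvd ih 2).mul_right w

variable {ι : Type*} {s : Finset ι} {pf : ι → k[X]} {e : ι → ℕ} {x : R}

theorem aeval_newtonSeq_prod_pow_eq_zero (q : k[X]) (hx : aeval x (∏ i ∈ s, pf i ^ e i) = 0)
    (n : ℕ) : aeval (newtonSeq (∏ i ∈ s, pf i) q x n) (∏ i ∈ s, pf i ^ e i) = 0 := by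
  refine zero_dvd_iff.mp (hx ▸ aeval_prod_pow_dvd s pf e fun i hi => ?_)
  exact (map_dvd (aeval x) (Finset.dvd_prod_of_mem pf hi)).trans
    (aeval_dvd_newtonSeq_sub _ q x n)

theorem aeval_prod_pow_eq_zero_of_le (hx : aeval x (∏ i ∈ s, pf i ^ e i) = 0) {m : ℕ}
    (hm : ∀ i ∈ s, e i ≤ m) : aeval x (∏ i ∈ s, pf i) ^ m = 0 := by
  rw [← map_pow, ← Finset.prod_pow]
  refine zero_dvd_iff.mp (hx ▸ map_dvd (aeval x) ?_)
  exact Finset.prod_dvd_prod_of_dvd _ _ fun i hi => pow_dvd_pow _ (hm i hi)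

theorem isNilpotent_sub_newtonSeq (q : k[X]) (hx : aeval x (∏ i ∈ s, pf i ^ e i) = 0) {m : ℕ}
    (hm : ∀ i ∈ s, e i ≤ m) (n : ℕ) : IsNilpotent (x - newtonSeq (∏ i ∈ s, pf i) q x n) := by
  obtain ⟨c, hc⟩ := aeval_dvd_newtonSeq_sub (∏ i ∈ s, pf i) q x n
  rw [← neg_sub, hc, isNilpotent_neg_iff]
  exact (Commute.all _ _).isNilpotent_mul_right ⟨m, aeval_prod_pow_eq_zero_of_le hx hm⟩

theorem aeval_newtonSeq_eq_zero {g q : k[X]} (hg : ∏ i ∈ s, pf i ^ e i = (∏ i ∈ s, pf i) * g)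
    (hq : g ∣ q * derivative (∏ i ∈ s, pf i) - 1) (hx : aeval x (∏ i ∈ s, pf i ^ e i) = 0)
    {N : ℕ} (hN : ∀ i ∈ s, e i ≤ 2 ^ N) :
    aeval (newtonSeq (∏ i ∈ s, pf i) q x N) (∏ i ∈ s, pf i) = 0 := by
  have hroot n := hg ▸ aeval_newtonSeq_prod_pow_eq_zero q hx n
  exact zero_dvd_iff.mp (aeval_prod_pow_eq_zero_of_le hx hN ▸
    pow_two_pow_dvd_aeval_newtonSeq hq hroot N)

end CommRing

section Uniqueness

theorem eq_of_isNilpotent_sub_of_aeval_eq_zero {k R : Type*} [CommRing k] [CommRing R]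
    [Algebra k R] {f : k[X]} (hf : f.Separable) {a b : R} (ha : aeval a f = 0)
    (hb : aeval b f = 0) (hab : IsNilpotent (a - b)) : a = b := by
  obtain ⟨c, c', hc⟩ := hf
  have hunit : IsUnit (aeval a (derivative f)) := by
    refine .of_mul_eq_one_right (aeval a c') ?_
    simpa [ha] using congrArg (aeval a) hc
  exact (existsUnique_nilpotent_sub_and_aeval_eq_zero (by simp [ha]) hunit).unique
    ⟨by simp, ha⟩ ⟨hab, hb⟩

variable {k A : Type*} [Field k] [Ring A] [Algebra k A]

theorem aeval_eq_zero_of_isNilpotent {f g : k[X]} (hg : g.Separable) {b : A}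
    (hgb : aeval b g = 0) (hnil : IsNilpotent (aeval b f)) : aeval b f = 0 := by
  classical
  obtain ⟨n, hn⟩ := hnil
  have hfn : aeval b (f ^ (n + 1)) = 0 := by rw [map_pow, pow_succ, hn, zero_mul]
  have hgcd : aeval b (EuclideanDomain.gcd g (f ^ (n + 1))) = 0 := by
    simp [EuclideanDomain.gcd_eq_gcd_ab, hgb, hfn]
  have hsq : Squarefree (EuclideanDomain.gcd g (f ^ (n + 1))) :=
    (hg.of_dvd (EuclideanDomain.gcd_dvd_left _ _)).squarefree
  obtain ⟨c, hc⟩ := (hsq.dvd_pow_iff_dvd n.succ_ne_zero).mp (EuclideanDomain.gcd_dvd_right _ _)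
  rw [hc, map_mul, hgcd, zero_mul]

open scoped IsMulCommutative in
theorem Commute.eq_of_isNilpotent_sub {a b : A} (hab : Commute a b) {f g : k[X]}
    (hf : f.Separable) (hg : g.Separable) (ha : aeval a f = 0) (hb : aeval b g = 0)
    (hn : IsNilpotent (a - b)) : a = b := by
  have : IsMulCommutative (Algebra.adjoin k {a, b}) := Algebra.isMulCommutative_adjoin k <| by
    rintro x (rfl | rfl) y (rfl | rfl)
    exacts [rfl, hab.eq, hab.symm.eq, rfl]
  let a' : Algebra.adjoin k {a, b} := ⟨a, Algebra.subset_adjoin (by simp)⟩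
  let b' : Algebra.adjoin k {a, b} := ⟨b, Algebra.subset_adjoin (by simp)⟩
  have ha' : aeval a' f = 0 := Subtype.val_injective (by rw [aeval_subalgebra_coe]; exact ha)
  have hb' : aeval b' g = 0 := Subtype.val_injective (by rw [aeval_subalgebra_coe]; exact hb)
  have hn' : IsNilpotent (a' - b') := by
    obtain ⟨n, hn⟩ := hn
    exact ⟨n, Subtype.val_injective hn⟩
  have hfb : aeval b' f = 0 := aeval_eq_zero_of_isNilpotent hg hb' (by
    simpa [ha'] using isNilpotent_aeval_sub_of_isNilpotent_sub f hn')
  exact congrArg Subtype.val (eq_of_isNilpotent_sub_of_aeval_eq_zero hf ha' hfb hn')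

theorem IsJordanChevalley.eq_of_mem_adjoin {u d s d' s' : A} (h : IsJordanChevalley k u d s)
    (hd : d ∈ Algebra.adjoin k {u}) (h' : IsJordanChevalley k u d' s') : d' = d ∧ s' = s := by
  obtain ⟨⟨f, hf, hfd⟩, hs, rfl, -⟩ := h
  obtain ⟨⟨f', hf', hfd'⟩, hs', hu, hds'⟩ := h'
  have hs_mem : s ∈ Algebra.adjoin k {d + s} := by
    simpa using sub_mem (Algebra.self_mem_adjoin_singleton k (d + s)) hd
  have hd'u : Commute d' (d + s) := hu ▸ (Commute.refl d').add_right hds'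
  have hs'u : Commute s' (d + s) := hu ▸ (Commute.symm hds').add_right (Commute.refl s')
  have hd'd : Commute d' d := Algebra.commute_of_mem_adjoin_singleton_of_commute hd hd'u
  have hss' : Commute s s' := (Algebra.commute_of_mem_adjoin_singleton_of_commute hs_mem hs'u).symm
  have hsub : d' - d = s - s' := by rw [sub_eq_sub_iff_add_eq_add, ← hu, add_comm]
  have heq : d' = d :=
    hd'd.eq_of_isNilpotent_sub hf' hf hfd' hfd (hsub ▸ hss'.isNilpotent_sub hs hs')
  exact ⟨heq, (add_left_cancel (heq ▸ hu)).symm⟩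

end Uniqueness

theorem separable_prod_of_monic_of_irreducible {k ι : Type*} [Field k] {s : Finset ι}
    {g : ι → k[X]} (hmon : ∀ i, (g i).Monic) (hirr : ∀ i, Irreducible (g i))
    (hsep : ∀ i, (g i).Separable) (hinj : ∀ i j, i ≠ j → g i ≠ g j) :
    (∏ i ∈ s, g i).Separable := by
  refine separable_prod' (fun i _ j _ hij => ?_) fun i _ => hsep i
  refine (hirr i).coprime_iff_not_dvd.mpr fun hdvd => hinj i j hij ?_
  exact eq_of_monic_of_associated (hmon i) (hmon j) ((hirr i).associated_of_dvd (hirr j) hdvd)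

theorem jordan_chevalley_newton_general
    {k : Type*} [Field k] {A : Type*} [Ring A] [Algebra k A]
    (u : A) (r : ℕ) (pf : Fin r → k[X]) (mexp : Fin r → ℕ)
    (hmon : ∀ i, (pf i).Monic) (hirr : ∀ i, Irreducible (pf i))
    (hsep : ∀ i, (pf i).Separable)
    (hdist : ∀ i j, i ≠ j → pf i ≠ pf j)
    (p ptilde pbar : k[X])
    (hp : p = ∏ i, pf i ^ mexp i)
    (hpt : ptilde = ∏ i, pf i)
    (hpb : p = ptilde * pbar)
    (hann : aeval u p = 0)
    (q : k[X]) (hq : pbar ∣ q * derivative ptilde - 1)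
    (m : ℕ) (hm : m = Finset.univ.sup mexp)
    (N : ℕ) (hN1 : m ≤ 2 ^ N)
    (d : ℕ → A) (hd0 : d 0 = u)
    (hdrec : ∀ n, d (n + 1) = d n - aeval (d n) ptilde * aeval (d n) q) :
    aeval (d N) ptilde = 0 ∧ AbsSemisimple k (d N) ∧ IsNilpotent (u - d N) ∧
    d N * (u - d N) = (u - d N) * d N ∧
    IsJordanChevalley k u (d N) (u - d N) ∧
    ∀ d' s' : A, IsJordanChevalley k u d' s' → d' = d N ∧ s' = u - d N := by
  subst hp hpt hm
  let S := Algebra.adjoin k {u}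
  let x : S := ⟨u, Algebra.self_mem_adjoin_singleton k u⟩
  have hd n : d n = S.val (newtonSeq (∏ i, pf i) q x n) := by
    rw [map_newtonSeq, eq_newtonSeq hd0 hdrec]; rfl
  have hx : aeval x (∏ i, pf i ^ mexp i) = 0 :=
    Subtype.val_injective (by rw [aeval_subalgebra_coe]; exact hann)
  have hbound : ∀ i ∈ Finset.univ, mexp i ≤ 2 ^ N := fun i hi => (Finset.le_sup hi).trans hN1
  have hroot : aeval (d N) (∏ i, pf i) = 0 := by
    rw [hd, aeval_algHom_apply, aeval_newtonSeq_eq_zero hpb hq hx hbound, map_zero]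
  have hnil : IsNilpotent (u - d N) := by
    rw [hd]; exact (isNilpotent_sub_newtonSeq q hx hbound N).map S.val
  have hcomm : d N * (u - d N) = (u - d N) * d N := by
    rw [hd]; exact congrArg S.val (mul_comm (newtonSeq (∏ i, pf i) q x N) (x - _))
  have hJC : IsJordanChevalley k u (d N) (u - d N) :=
    ⟨⟨_, separable_prod_of_monic_of_irreducible hmon hirr hsep hdist, hroot⟩, hnil,
      (add_sub_cancel _ _).symm, hcomm⟩
  refine ⟨hroot, hJC.1, hnil, hcomm, hJC, fun d' s' h' => hJC.eq_of_mem_adjoin ?_ h'⟩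
  rw [hd]; exact (newtonSeq (∏ i, pf i) q x N).2

theorem jordan_chevalley_newton
    {k : Type*} [Field k] {A : Type*} [Ring A] [Algebra k A]
    (u : A) (r : ℕ) (hr : 0 < r) (pf : Fin r → k[X]) (mexp : Fin r → ℕ)
    (hmon : ∀ i, (pf i).Monic) (hirr : ∀ i, Irreducible (pf i))
    (hsep : ∀ i, (pf i).Separable)
    (hdist : ∀ i j, i ≠ j → pf i ≠ pf j)
    (hm1 : ∀ i, 1 ≤ mexp i)
    (p ptilde pbar : k[X])
    (hp : p = ∏ i, pf i ^ mexp i)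
    (hpt : ptilde = ∏ i, pf i)
    (hpb : p = ptilde * pbar)
    (hann : aeval u p = 0)
    (q : k[X]) (hq : pbar ∣ q * derivative ptilde - 1)
    (m : ℕ) (hm : m = Finset.univ.sup mexp)
    (N : ℕ) (hN1 : m ≤ 2 ^ N) (hN2 : ∀ M, m ≤ 2 ^ M → N ≤ M)
    (d : ℕ → A) (hd0 : d 0 = u)
    (hdrec : ∀ n, d (n + 1) = d n - aeval (d n) ptilde * aeval (d n) q) :
    aeval (d N) ptilde = 0 ∧ AbsSemisimple k (d N) ∧ IsNilpotent (u - d N) ∧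
    d N * (u - d N) = (u - d N) * d N ∧
    IsJordanChevalley k u (d N) (u - d N) ∧
    ∀ d' s' : A, IsJordanChevalley k u d' s' → d' = d N ∧ s' = u - d N :=
  jordan_chevalley_newton_general u r pf mexp hmon hirr hsep hdist p ptilde pbar hp hpt hpb hann q
    hq m hm N hN1 d hd0 hdrec
end

section
/- Let u and v be two absolutely semisimple elements of a unital associative k-algebra A such that uv = vu. Then the unital subalgebra k[u, v] of A generated by u and v contains no nonzero nilpotent element. -/
/-!
Let `f(u) = 0` and `g(v) = 0` with `f, g` separable and monic. Since `u` and `v` commute,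
`k[u, v]` is the image of `S = (k[X] ⧸ (f))[Y] ⧸ (g)`. Adjoining a root of a monic separable
polynomial to a reduced Artinian ring gives again a reduced Artinian ring, so `S` is a
commutative semisimple ring. Quotients of such a ring are again semisimple, hence reduced,
so the image of `S` has no nonzero nilpotents.
-/

open Polynomial

theorem AbsSemisimple.exists_monic {k A : Type*} [Field k] [Ring A] [Algebra k A] {u : A}
    (hu : AbsSemisimple k u) : ∃ f : k[X], f.Monic ∧ f.Separable ∧ aeval u f = 0 := by
  obtain ⟨f, hf, hfu⟩ := hu
  have hf0 : f ≠ 0 := hf.ne_zero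
  refine ⟨f * C f.leadingCoeff⁻¹, monic_mul_leadingCoeff_inv hf0,
    hf.mul_unit (isUnit_C.mpr (inv_ne_zero (leadingCoeff_ne_zero.mpr hf0)).isUnit), ?_⟩
  rw [map_mul, hfu, zero_mul]

namespace Polynomial

variable {R : Type*} [CommRing R] [IsArtinianRing R] [IsReduced R] {g : R[X]}

theorem Separable.isReduced_adjoinRoot (hg : g.Separable) : IsReduced (AdjoinRoot g) :=
  (Ideal.isRadical_iff_quotient_reduced _).mp
    (isRadical_iff_span_singleton.mp hg.squarefree.isRadical)

theorem Monic.isSemisimpleRing_adjoinRoot (hm : g.Monic) (hg : g.Separable) :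
    IsSemisimpleRing (AdjoinRoot g) :=
  have : Module.Finite R (AdjoinRoot g) := (AdjoinRoot.powerBasis' hm).finite
  have : IsArtinianRing (AdjoinRoot g) := .of_finite R _
  have := hg.isReduced_adjoinRoot
  IsArtinianRing.isSemisimpleRing_of_isReduced _

end Polynomial

theorem RingHom.eq_zero_of_isNilpotent_of_isSemisimpleRing {S A : Type*} [CommRing S]
    [IsSemisimpleRing S] [Ring A] (φ : S →+* A) {s : S} (hs : IsNilpotent (φ s)) :
    φ s = 0 := by
  have : IsSemisimpleRing (S ⧸ RingHom.ker φ) :=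
    (Ideal.Quotient.mk _).isSemisimpleRing_of_surjective Ideal.Quotient.mk_surjective
  have hker : (RingHom.ker φ).IsRadical :=
    (Ideal.isRadical_iff_quotient_reduced _).mpr inferInstance
  obtain ⟨n, hn⟩ := hs
  exact hker ⟨n, by rwa [RingHom.mem_ker, map_pow]⟩

namespace AdjoinRoot

variable {k R A : Type*} [CommSemiring k] [CommRing R] [Ring A] [Algebra k R] [Algebra k A]
  {g : R[X]}

noncomputable def liftAlgHomOfCommute (φ : R →ₐ[k] A) (x : A) (hx : ∀ r, Commute (φ r) x)
    (hg : g.eval₂ φ x = 0) : AdjoinRoot g →ₐ[k] A :=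
  Ideal.Quotient.liftₐ _ (eval₂AlgHom φ x hx) fun p hp ↦ by
    obtain ⟨q, rfl⟩ := Ideal.mem_span_singleton.mp hp
    rw [map_mul, eval₂AlgHom_apply, hg, zero_mul]

variable (φ : R →ₐ[k] A) (x : A) (hx : ∀ r, Commute (φ r) x) (hg : g.eval₂ φ x = 0)

theorem liftAlgHomOfCommute_root : liftAlgHomOfCommute φ x hx hg (root g) = x :=
  eval₂_X _ _

theorem liftAlgHomOfCommute_of (r : R) : liftAlgHomOfCommute φ x hx hg (of g r) = φ r :=
  eval₂_C _ _

end AdjoinRoot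

open AdjoinRoot in
theorem exists_algHom_adjoinRoot_map_of_commute {k A : Type*} [CommRing k] [Ring A]
    [Algebra k A] {u v : A} {f g : k[X]} (hf : aeval u f = 0) (hg : aeval v g = 0)
    (huv : Commute u v) :
    ∃ φ : AdjoinRoot (g.map (algebraMap k (AdjoinRoot f))) →ₐ[k] A,
      Algebra.adjoin k {u, v} ≤ φ.range := by
  let φ₁ := liftAlgHomOfCommute (Algebra.ofId k A) u (fun r ↦ Algebra.commutes r u) hf
  have hφ₁ : ∀ r, Commute (φ₁ r) v := fun r ↦ AdjoinRoot.induction_on f r fun p ↦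
    (Algebra.commute_of_mem_adjoin_singleton_of_commute (aeval_mem_adjoin_singleton k u)
      huv.symm).symm
  let φ := liftAlgHomOfCommute (g := g.map (algebraMap k (AdjoinRoot f))) φ₁ v hφ₁
    (by rwa [eval₂_map, AlgHom.comp_algebraMap_of_tower])
  refine ⟨φ, Algebra.adjoin_le ?_⟩
  rintro x (rfl | rfl)
  · exact φ.mem_range.mpr
      ⟨of _ (root f), (liftAlgHomOfCommute_of ..).trans (liftAlgHomOfCommute_root ..)⟩
  · exact φ.mem_range.mpr ⟨root _, liftAlgHomOfCommute_root ..⟩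

theorem no_nonzero_nilpotent_in_adjoin_of_commuting_absSemisimple
    {k : Type*} [Field k] {A : Type*} [Ring A] [Algebra k A]
    (u v : A) (hu : AbsSemisimple k u) (hv : AbsSemisimple k v)
    (huv : u * v = v * u) :
    ∀ w ∈ Algebra.adjoin k ({u, v} : Set A), IsNilpotent w → w = 0 := by
  obtain ⟨f, hfm, hf, hfu⟩ := hu.exists_monic
  obtain ⟨g, hgm, hg, hgv⟩ := hv.exists_monic
  have := hfm.isSemisimpleRing_adjoinRoot hf
  have := (hgm.map (algebraMap k (AdjoinRoot f))).isSemisimpleRing_adjoinRoot hg.map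
  obtain ⟨φ, hφ⟩ := exists_algHom_adjoinRoot_map_of_commute hfu hgv huv
  intro w hw hnil
  obtain ⟨s, rfl⟩ := hφ hw
  exact φ.toRingHom.eq_zero_of_isNilpotent_of_isSemisimpleRing hnil
end

section
/- Let k be a field, A a unital associative k-algebra, and u ∈ A an element possessing a nonzero annihilating polynomial all of whose monic irreducible factors are separable. Then u admits a Jordan–Chevalley decomposition (d, s) in which both d and s lie in the unital subalgebra k[u] of A generated by u (i.e., d and s are polynomials in u with coefficients in k). -/
open Polynomial

/-!
The squarefree part `g` of `p` is separable, because its irreducible factors are, and `p ∣ g ^ n`.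
In the commutative subalgebra `k[u]`, `g(u)` is therefore nilpotent and, by a Bézout relation
`a g ^ n + b g' = 1`, `g'(u)` is a unit; Newton's iteration for `g` started at `u` then converges to
a root `d ∈ k[u]` of `g` with `u - d` nilpotent.
-/

namespace Polynomial

variable {k : Type*} [Field k]

theorem separable_of_squarefree_of_forall_irreducible_dvd {g : k[X]} (sqf : Squarefree g)
    (h : ∀ q : k[X], Irreducible q → q ∣ g → q.Separable) : g.Separable := by
  refine isCoprime_of_irreducible_dvd (sqf.ne_zero ·.1) ?_
  rintro q hq ⟨r, rfl⟩ dvd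
  replace dvd : q ∣ r := by
    rw [derivative_mul, dvd_add_left (dvd_mul_right q _)] at dvd
    exact (h q hq (dvd_mul_right q r)).dvd_of_dvd_mul_left dvd
  exact hq.1 (sqf _ <| mul_dvd_mul_left _ dvd)

theorem exists_separable_dvd_pow_of_forall_monic_irreducible_dvd {p : k[X]} (hp : p ≠ 0)
    (h : ∀ q : k[X], q.Monic → Irreducible q → q ∣ p → q.Separable) :
    ∃ (g : k[X]) (n : ℕ), g.Separable ∧ p ∣ g ^ n := by
  classical
  obtain ⟨g, n, sqf, hgp, hpg⟩ := exists_squarefree_dvd_pow_of_ne_zero hp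
  refine ⟨g, n, separable_of_squarefree_of_forall_irreducible_dvd sqf fun q hq hqg => ?_, hpg⟩
  have : (normalize q).Separable :=
    h _ (monic_normalize hq.ne_zero) ((associated_normalize q).irreducible hq)
      (normalize_dvd_iff.mpr (hqg.trans hgp))
  exact this.of_dvd (dvd_normalize_iff.mpr dvd_rfl)

theorem Separable.isUnit_aeval_derivative {R B : Type*} [CommRing R] [CommRing B] [Algebra R B]
    {g : R[X]} (hg : g.Separable) {x : B} (hx : IsNilpotent (aeval x g)) :
    IsUnit (aeval x (derivative g)) := by
  obtain ⟨n, hn⟩ := hx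
  obtain ⟨_, b, hab⟩ := hg.pow_left (m := n)
  refine .of_mul_eq_one_right (aeval x b) ?_
  simpa [hn] using congr_arg (aeval x) hab

end Polynomial

section

variable {k A B : Type*} [Field k] [Ring A] [Algebra k A] [Ring B] [Algebra k B]

theorem AbsSemisimple.map {d : A} (hd : AbsSemisimple k d) (φ : A →ₐ[k] B) :
    AbsSemisimple k (φ d) := by
  obtain ⟨f, hf, hfd⟩ := hd
  exact ⟨f, hf, by rw [aeval_algHom_apply, hfd, map_zero]⟩

theorem IsJordanChevalley.map {u d s : A} (h : IsJordanChevalley k u d s) (φ : A →ₐ[k] B) :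
    IsJordanChevalley k (φ u) (φ d) (φ s) := by
  obtain ⟨hd, hs, rfl, hcomm⟩ := h
  exact ⟨hd.map φ, hs.map φ, map_add φ d s, by rw [← map_mul, hcomm, map_mul]⟩

end

theorem exists_isJordanChevalley_of_separable {k B : Type*} [Field k] [CommRing B] [Algebra k B]
    {x : B} {g : k[X]} (hg : g.Separable) (hx : IsNilpotent (aeval x g)) :
    ∃ d s : B, IsJordanChevalley k x d s := by
  obtain ⟨d, ⟨hs, hd⟩, -⟩ :=
    existsUnique_nilpotent_sub_and_aeval_eq_zero hx (hg.isUnit_aeval_derivative hx)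
  exact ⟨d, x - d, ⟨g, hg, hd⟩, hs, (add_sub_cancel d x).symm, mul_comm _ _⟩

theorem jordan_chevalley_of_separable_annihilator
    {k : Type*} [Field k] {A : Type*} [Ring A] [Algebra k A]
    (u : A) (p : k[X]) (hp : p ≠ 0) (hann : aeval u p = 0)
    (hfac : ∀ q : k[X], q.Monic → Irreducible q → q ∣ p → q.Separable) :
    ∃ d s : A, IsJordanChevalley k u d s ∧
      d ∈ Algebra.adjoin k ({u} : Set A) ∧ s ∈ Algebra.adjoin k ({u} : Set A) := by
  obtain ⟨g, n, hg, hpg⟩ := exists_separable_dvd_pow_of_forall_monic_irreducible_dvd hp hfac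
  set B := Algebra.adjoin k ({u} : Set A)
  set x : B := ⟨u, Algebra.self_mem_adjoin_singleton k u⟩
  have hx : IsNilpotent (aeval x g) := by
    refine ⟨n, Subtype.ext ?_⟩
    obtain ⟨q, hq⟩ := hpg
    rw [← map_pow, aeval_subalgebra_coe, hq, map_mul, hann, zero_mul, ZeroMemClass.coe_zero]
  obtain ⟨d, s, hds⟩ := exists_isJordanChevalley_of_separable hg hx
  exact ⟨d, s, hds.map B.val, d.2, s.2⟩
end

section
/- Let k be a field, A a unital associative k-algebra, and u ∈ A. Suppose u admits a Jordan–Chevalley decomposition (d, s) in which d = P(u) for some polynomial P ∈ k[x]. Then this decomposition is unique: if (d', s') is any Jordan–Chevalley decomposition of u, then d' = d and s' = s. -/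
open Polynomial

/-!
Any other decomposition `u = d' + s'` has `d'` commuting with `u`, hence with `d = P(u)` and with
`s = u - d`, so `d - d' = s' - s` is nilpotent. Inside the commutative subalgebra generated by `d`
and `d'`, let `g` be a separable polynomial killing `d'`. Then `g(d)` is nilpotent, hence zero
since the minimal polynomial of `d` is squarefree; separability makes `g'(d)` a unit, and the
uniqueness part of Newton's method says that `g` has only one root nilpotently close to `d`.
-/

namespace AbsSemisimple

variable {k : Type*} [Field k]

theorem aeval_eq_zero_of_isNilpotent {A : Type*} [Ring A] [Algebra k A] {x : A}
    (hx : AbsSemisimple k x) {g : k[X]} (hg : IsNilpotent (aeval x g)) : aeval x g = 0 := by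
  obtain ⟨f, hf, hfx⟩ := hx
  obtain ⟨n, hn⟩ := hg
  have hsq : Squarefree (minpoly k x) := hf.squarefree.squarefree_of_dvd (minpoly.dvd k x hfx)
  rw [← minpoly.dvd_iff]
  refine (hsq.dvd_pow_iff_dvd n.succ_ne_zero).1 (minpoly.dvd k x ?_)
  rw [map_pow, pow_succ, hn, zero_mul]

theorem of_map {A B : Type*} [Ring A] [Algebra k A] [Ring B] [Algebra k B] (φ : B →ₐ[k] A)
    (hφ : Function.Injective φ) {x : B} (hx : AbsSemisimple k (φ x)) : AbsSemisimple k x := by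
  obtain ⟨f, hf, hfx⟩ := hx
  exact ⟨f, hf, hφ (by rw [← aeval_algHom_apply, hfx, map_zero])⟩

theorem eq_of_isNilpotent_sub {R : Type*} [CommRing R] [Algebra k R] {x y : R}
    (hx : AbsSemisimple k x) (hy : AbsSemisimple k y) (hxy : IsNilpotent (x - y)) : x = y := by
  obtain ⟨g, hg, hgy⟩ := hy
  have hgx : aeval x g = 0 := hx.aeval_eq_zero_of_isNilpotent <| by
    simpa [hgy] using isNilpotent_aeval_sub_of_isNilpotent_sub g hxy
  have hg'x : IsUnit (aeval x (derivative g)) := by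
    simpa [hgx, isCoprime_zero_left] using ((separable_def g).1 hg).map (aeval x).toRingHom
  obtain ⟨r, -, hr⟩ := existsUnique_nilpotent_sub_and_aeval_eq_zero
    (by simp [hgx]) hg'x
  exact (hr x ⟨by simp, hgx⟩).trans (hr y ⟨hxy, hgy⟩).symm

open scoped IsMulCommutative in
theorem eq_of_commute_of_isNilpotent_sub {A : Type*} [Ring A] [Algebra k A] {x y : A}
    (hx : AbsSemisimple k x) (hy : AbsSemisimple k y) (hxy : Commute x y)
    (hn : IsNilpotent (x - y)) : x = y := by
  let B := Algebra.adjoin k ({x, y} : Set A)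
  have : IsMulCommutative B := Algebra.isMulCommutative_adjoin k <| by
    simp only [Set.mem_insert_iff, Set.mem_singleton_iff]
    rintro a (rfl | rfl) b (rfl | rfl)
    exacts [rfl, hxy.eq, hxy.symm.eq, rfl]
  let X : B := ⟨x, Algebra.subset_adjoin (by simp)⟩
  let Y : B := ⟨y, Algebra.subset_adjoin (by simp)⟩
  have hXY : X = Y := eq_of_isNilpotent_sub (k := k)
    (of_map (x := X) B.val Subtype.val_injective hx)
    (of_map (x := Y) B.val Subtype.val_injective hy)
    ((IsNilpotent.map_iff (f := B.val) Subtype.val_injective).1 hn)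
  exact congrArg Subtype.val hXY

end AbsSemisimple

theorem jordan_chevalley_unique_of_polynomial
    {k : Type*} [Field k] {A : Type*} [Ring A] [Algebra k A]
    (u d s : A) (hds : IsJordanChevalley k u d s)
    (P : k[X]) (hdP : d = aeval u P) :
    ∀ d' s' : A, IsJordanChevalley k u d' s' → d' = d ∧ s' = s := by
  intro d' s' ⟨hd', hs', hu', hcomm'⟩
  obtain ⟨hd, hs, hu, -⟩ := hds
  have hdu : d ∈ Algebra.adjoin k {u} := by
    rw [hdP, Algebra.adjoin_singleton_eq_range_aeval]; exact ⟨P, rfl⟩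
  have hud : Commute u d := Algebra.commute_of_mem_adjoin_self hdu
  have hud' : Commute u d' := by rw [hu']; exact (Commute.refl d').add_left hcomm'.symm
  have hdd' : Commute d d' :=
    (Algebra.commute_of_mem_adjoin_singleton_of_commute hdu hud'.symm).symm
  have hss' : Commute s s' := by
    rw [eq_sub_of_add_eq' hu.symm, eq_sub_of_add_eq' hu'.symm]
    exact ((Commute.refl u).sub_right hud').sub_left (hud.symm.sub_right hdd')
  have hnil : IsNilpotent (d - d') := by
    rw [show d - d' = s' - s by grind]
    exact hss'.symm.isNilpotent_sub hs' hs
  have hd'd : d' = d := (hd.eq_of_commute_of_isNilpotent_sub hd' hdd' hnil).symm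
  exact ⟨hd'd, by rw [hd'd, hu] at hu'; exact (add_left_cancel hu').symm⟩
end

section
/- Let k be a field, A a unital associative k-algebra, and u ∈ A. If u admits a Jordan–Chevalley decomposition (d, s), then u is separable: there exists a nonzero annihilating polynomial of u all of whose monic irreducible factors are separable. (Indeed, if p is the minimal polynomial of d, then p(u) is nilpotent, so p^m annihilates u for some m ≥ 1, and every irreducible factor of p^m divides the separable polynomial p.) -/
open Polynomial

/-! If `d` is annihilated by a separable `f` and `u - d` is a nilpotent commuting with `d`, then
`f(u) ≡ f(d) = 0` modulo nilpotents, so `f(u)` is nilpotent and some power of `f` annihilates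
`u`; the irreducible factors of that power are those of `f`, hence separable. -/

open scoped IsMulCommutative in
/-- The commutative case `Polynomial.isNilpotent_aeval_sub_of_isNilpotent_sub`, transported
through the commutative subalgebra generated by `a` and `b`. -/
theorem Commute.isNilpotent_aeval_sub {R A : Type*} [CommRing R] [Ring A] [Algebra R A]
    (P : R[X]) {a b : A} (hab : Commute a b) (h : IsNilpotent (a - b)) :
    IsNilpotent (aeval a P - aeval b P) := by
  have : IsMulCommutative (Algebra.adjoin R {a, b}) := Algebra.isMulCommutative_adjoin R <| by
    simp only [Set.mem_insert_iff, Set.mem_singleton_iff]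
    rintro x (rfl | rfl) y (rfl | rfl) <;> first | rfl | exact hab.eq | exact hab.eq.symm
  let a' : Algebra.adjoin R {a, b} := ⟨a, Algebra.subset_adjoin (by simp)⟩
  let b' : Algebra.adjoin R {a, b} := ⟨b, Algebra.subset_adjoin (by simp)⟩
  have h' : IsNilpotent (a' - b') := by
    obtain ⟨n, hn⟩ := h
    exact ⟨n, Subtype.ext hn⟩
  simpa [a', b'] using
    (isNilpotent_aeval_sub_of_isNilpotent_sub P h').map (Algebra.adjoin R {a, b}).val

theorem IsJordanChevalley.isNilpotent_aeval {k A : Type*} [Field k] [Ring A] [Algebra k A]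
    {u d s : A} (hds : IsJordanChevalley k u d s) {f : k[X]} (hf : aeval d f = 0) :
    IsNilpotent (aeval u f) := by
  obtain ⟨-, hs, rfl, hcomm⟩ := hds
  have hsub : IsNilpotent (aeval (d + s) f - aeval d f) :=
    ((Commute.refl d).add_left (Commute.symm hcomm)).isNilpotent_aeval_sub f (by simpa using hs)
  simpa [hf] using hsub

theorem Polynomial.Separable.of_irreducible_dvd_pow {k : Type*} [Field k] {f q : k[X]}
    (hf : f.Separable) (hq : Irreducible q) {n : ℕ} (hdvd : q ∣ f ^ n) : q.Separable :=
  hf.of_dvd (hq.prime.dvd_of_dvd_pow hdvd)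

theorem separable_of_jordan_chevalley
    {k : Type*} [Field k] {A : Type*} [Ring A] [Algebra k A]
    (u d s : A) (hds : IsJordanChevalley k u d s) :
    ∃ p : k[X], p ≠ 0 ∧ aeval u p = 0 ∧
      ∀ q : k[X], q.Monic → Irreducible q → q ∣ p → q.Separable := by
  obtain ⟨f, hf, hfd⟩ := hds.1
  obtain ⟨n, hn⟩ := hds.isNilpotent_aeval hfd
  exact ⟨f ^ n, pow_ne_zero n hf.ne_zero, by rw [map_pow, hn],
    fun q _ hq hdvd ↦ hf.of_irreducible_dvd_pow hq hdvd⟩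
end

section
/- Let k be a field, A a unital associative k-algebra, u ∈ A, and let p = p_1^{m_1}···p_r^{m_r} ∈ k[x] be a monic annihilating polynomial of u whose monic irreducible factors p_1, …, p_r are pairwise distinct and separable. Set p̃ = p_1···p_r and p̄ = p/p̃, let q ∈ k[x] satisfy q·p̃' ≡ 1 (mod p̄), and define d_0 = u, d_{n+1} = d_n − p̃(d_n)·q(d_n). Then for every n ≥ 0 there exists an element b of the unital subalgebra k[u] generated by u such that p̃(d_n) = p̃(u)^{2^n}·b. -/
/-!
Work in the commutative ring `k[u]`, where `p(u) = 0`. Every iterate stays congruent to `u`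
modulo `p̃(u)`, so each `p_i(u)` divides `p_i(d_n)`; hence `p(u) ∣ p(d_n)`, i.e. `p(d_n) = 0`.
By Taylor's formula, `p̃(d - p̃(d) q(d)) = p̃(d) (1 - p̃'(d) q(d)) + p̃(d)² c`, and the first term
is a multiple of `p̃(d) p̄(d) = p(d) = 0`; thus `p̃(d_{n+1}) ∈ p̃(d_n)² k[u]`, which squares the
exponent at every step.
-/

open Polynomial

section NewtonStep

variable {R A B : Type*} [CommRing R] [Ring A] [Algebra R A] [Ring B] [Algebra R B]

/-- A Newton step for `f`, with `q` in the role of `1 / f'`. -/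
noncomputable def newtonStep (f q : R[X]) (a : A) : A :=
  a - aeval a f * aeval a q

theorem AlgHom.map_newtonStep (φ : A →ₐ[R] B) (f q : R[X]) (a : A) :
    φ (newtonStep f q a) = newtonStep f q (φ a) := by
  simp only [newtonStep, map_sub, map_mul, aeval_algHom_apply]

theorem AlgHom.map_iterate_newtonStep (φ : A →ₐ[R] B) (f q : R[X]) (n : ℕ) (a : A) :
    φ ((newtonStep f q)^[n] a) = (newtonStep f q)^[n] (φ a) :=
  Function.Semiconj.iterate_right (φ.map_newtonStep f q) n a

end NewtonStep

section Commutative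

variable {R S : Type*} [CommRing R] [CommRing S] [Algebra R S]

theorem sub_dvd_aeval_sub (a x : S) (f : R[X]) : a - x ∣ aeval a f - aeval x f := by
  simpa only [eval_map_algebraMap] using sub_dvd_eval_sub a x (f.map (algebraMap R S))

theorem dvd_aeval_of_dvd_sub {f : R[X]} {x a : S} (h : aeval x f ∣ a - x) :
    aeval x f ∣ aeval a f :=
  dvd_sub_self_right.mp (h.trans (sub_dvd_aeval_sub a x f))

theorem dvd_newtonStep_sub {f q : R[X]} {x a : S} (h : aeval x f ∣ a - x) :
    aeval x f ∣ newtonStep f q a - x := by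
  have hstep : newtonStep f q a - x = (a - x) - aeval a f * aeval a q := by
    rw [newtonStep]; ring
  rw [hstep]
  exact dvd_sub h ((dvd_aeval_of_dvd_sub h).mul_right _)

theorem dvd_iterate_newtonStep_sub (f q : R[X]) (x : S) (n : ℕ) :
    aeval x f ∣ (newtonStep f q)^[n] x - x := by
  induction n with
  | zero => simp
  | succ n ih =>
    rw [Function.iterate_succ_apply']
    exact dvd_newtonStep_sub ih

theorem aeval_dvd_aeval_of_radical_dvd_sub {ι : Type*} [Fintype ι] {g : ι → R[X]} {m : ι → ℕ}
    {p f : R[X]} (hp : p = ∏ i, g i ^ m i) (hf : f = ∏ i, g i) {x a : S}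
    (h : aeval x f ∣ a - x) : aeval x p ∣ aeval a p := by
  subst hp hf
  simp only [map_prod, map_pow]
  refine Finset.prod_dvd_prod_of_dvd _ _ fun i _ => pow_dvd_pow_of_dvd ?_ _
  refine dvd_aeval_of_dvd_sub (Dvd.dvd.trans ?_ h)
  rw [map_prod]
  exact Finset.dvd_prod_of_mem _ (Finset.mem_univ i)

theorem exists_aeval_newtonStep_eq_sq_mul {f g q : R[X]} (hq : g ∣ q * derivative f - 1)
    {a : S} (ha : aeval a (f * g) = 0) :
    ∃ c, aeval (newtonStep f q a) f = aeval a f ^ 2 * c := by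
  obtain ⟨s, hs⟩ := hq
  have hs' := congrArg (aeval a) hs
  simp only [map_sub, map_mul, map_one] at hs'
  rw [map_mul] at ha
  obtain ⟨c, hc⟩ := binomExpansion (f.map (algebraMap R S)) a (-(aeval a f * aeval a q))
  simp only [derivative_map, eval_map_algebraMap] at hc
  refine ⟨aeval a q ^ 2 * c, ?_⟩
  rw [newtonStep, sub_eq_add_neg, hc]
  linear_combination (-aeval a f) * hs' - aeval a s * ha

theorem exists_aeval_iterate_newtonStep_eq_pow_mul {ι : Type*} [Fintype ι] {g : ι → R[X]}
    {m : ι → ℕ} {p f h q : R[X]} (hp : p = ∏ i, g i ^ m i) (hf : f = ∏ i, g i)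
    (hpf : p = f * h) (hq : h ∣ q * derivative f - 1) {x : S} (hx : aeval x p = 0) (n : ℕ) :
    ∃ b, aeval ((newtonStep f q)^[n] x) f = aeval x f ^ 2 ^ n * b := by
  induction n with
  | zero => exact ⟨1, by simp⟩
  | succ n ih =>
    obtain ⟨b, hb⟩ := ih
    have hroot : aeval ((newtonStep f q)^[n] x) (f * h) = 0 := by
      have hdvd := aeval_dvd_aeval_of_radical_dvd_sub hp hf (dvd_iterate_newtonStep_sub f q x n)
      rwa [hx, zero_dvd_iff, hpf] at hdvd
    obtain ⟨c, hc⟩ := exists_aeval_newtonStep_eq_sq_mul hq hroot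
    refine ⟨b ^ 2 * c, ?_⟩
    rw [Function.iterate_succ_apply', hc, hb]
    ring

end Commutative

theorem newton_iteration_quadratic_convergence_general
    {k : Type*} [Field k] {A : Type*} [Ring A] [Algebra k A]
    (u : A) (r : ℕ) (pf : Fin r → k[X]) (mexp : Fin r → ℕ)
    (p ptilde pbar : k[X])
    (hp : p = ∏ i, pf i ^ mexp i)
    (hpt : ptilde = ∏ i, pf i)
    (hpb : p = ptilde * pbar)
    (hann : aeval u p = 0)
    (q : k[X]) (hq : pbar ∣ q * derivative ptilde - 1)
    (d : ℕ → A) (hd0 : d 0 = u)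
    (hdrec : ∀ n, d (n + 1) = d n - aeval (d n) ptilde * aeval (d n) q) :
    ∀ n : ℕ, ∃ b ∈ Algebra.adjoin k ({u} : Set A),
      aeval (d n) ptilde = (aeval u ptilde) ^ (2 ^ n) * b := by
  let K := Algebra.adjoin k ({u} : Set A)
  let x : K := ⟨u, Algebra.self_mem_adjoin_singleton k u⟩
  have hd : ∀ n, d n = (newtonStep ptilde q)^[n] u := by
    intro n
    induction n with
    | zero => exact hd0
    | succ n ih => rw [hdrec, ih, Function.iterate_succ_apply', newtonStep]
  have hx : aeval x p = 0 := Subtype.val_injective (by rw [aeval_subalgebra_coe]; exact hann)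
  intro n
  obtain ⟨b, hb⟩ := exists_aeval_iterate_newtonStep_eq_pow_mul hp hpt hpb hq hx n
  refine ⟨b, b.2, ?_⟩
  rw [hd, show u = K.val x from rfl, ← K.val.map_iterate_newtonStep, aeval_algHom_apply, hb,
    map_mul, map_pow, aeval_algHom_apply]
  rfl

theorem newton_iteration_quadratic_convergence
    {k : Type*} [Field k] {A : Type*} [Ring A] [Algebra k A]
    (u : A) (r : ℕ) (hr : 0 < r) (pf : Fin r → k[X]) (mexp : Fin r → ℕ)
    (hmon : ∀ i, (pf i).Monic) (hirr : ∀ i, Irreducible (pf i))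
    (hsep : ∀ i, (pf i).Separable)
    (hdist : ∀ i j, i ≠ j → pf i ≠ pf j)
    (hm1 : ∀ i, 1 ≤ mexp i)
    (p ptilde pbar : k[X])
    (hp : p = ∏ i, pf i ^ mexp i)
    (hpt : ptilde = ∏ i, pf i)
    (hpb : p = ptilde * pbar)
    (hann : aeval u p = 0)
    (q : k[X]) (hq : pbar ∣ q * derivative ptilde - 1)
    (d : ℕ → A) (hd0 : d 0 = u)
    (hdrec : ∀ n, d (n + 1) = d n - aeval (d n) ptilde * aeval (d n) q) :
    ∀ n : ℕ, ∃ b ∈ Algebra.adjoin k ({u} : Set A),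
      aeval (d n) ptilde = (aeval u ptilde) ^ (2 ^ n) * b :=
  newton_iteration_quadratic_convergence_general u r pf mexp p ptilde pbar hp hpt hpb hann q hq d
    hd0 hdrec
end

section
/- Let k be a field, B a commutative unital k-algebra, and let p = p_1^{m_1}···p_r^{m_r} ∈ k[x] where p_1, …, p_r are pairwise distinct monic irreducible polynomials and m_j ≥ 1; set p̃ = p_1···p_r. If v ∈ B satisfies p(v) = 0 and w ∈ B lies in the ideal p̃(v)·B, then p(v + w) = 0. -/
open Polynomial

theorem annihilator_stable_under_radical_perturbation
    {k : Type*} [Field k] {B : Type*} [CommRing B] [Algebra k B]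
    (r : ℕ) (pf : Fin r → k[X]) (mexp : Fin r → ℕ)
    (hmon : ∀ i, (pf i).Monic) (hirr : ∀ i, Irreducible (pf i))
    (hdist : ∀ i j, i ≠ j → pf i ≠ pf j)
    (hm1 : ∀ i, 1 ≤ mexp i)
    (p ptilde : k[X])
    (hp : p = ∏ i, pf i ^ mexp i)
    (hpt : ptilde = ∏ i, pf i)
    (v w : B) (hv : aeval v p = 0)
    (hw : ∃ b : B, w = aeval v ptilde * b) :
    aeval (v + w) p = 0 := by
  obtain ⟨b, hb⟩ := hw
  have key : ∀ i, aeval v (pf i) ∣ aeval (v + w) (pf i) := by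
    intro i
    have h1 : w ∣ aeval (v + w) (pf i) - aeval v (pf i) := by
      have h := Polynomial.sub_dvd_eval_sub (v + w) v ((pf i).map (algebraMap k B))
      simpa [Polynomial.eval_map, ← Polynomial.aeval_def] using h
    have h2 : aeval v (pf i) ∣ w := by
      rw [hb, hpt, map_prod]
      exact Dvd.dvd.mul_right (Finset.dvd_prod_of_mem _ (Finset.mem_univ i)) b
    have h3 : aeval v (pf i) ∣
        aeval v (pf i) + (aeval (v + w) (pf i) - aeval v (pf i)) :=
      dvd_add dvd_rfl (h2.trans h1)
    simpa using h3
  have hdvd : aeval v p ∣ aeval (v + w) p := by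
    rw [hp]
    simp only [map_prod, map_pow]
    exact Finset.prod_dvd_prod_of_dvd _ _ (fun i _ => pow_dvd_pow_of_dvd (key i) _)
  rw [hv] at hdvd
  exact zero_dvd_iff.mp hdvd
end

section
/- Let k be a field, A a unital associative k-algebra, u ∈ A, and let p = p_1^{m_1}···p_r^{m_r} ∈ k[x] be a monic annihilating polynomial of u whose monic irreducible factors p_1, …, p_r are pairwise distinct and separable. Set p̃ = p_1···p_r, p̄ = p/p̃ and m = max_{1≤j≤r} m_j, let q ∈ k[x] satisfy q·p̃' ≡ 1 (mod p̄), and define d_0 = u, d_{n+1} = d_n − p̃(d_n)·q(d_n). Then (u − d_n)^m = 0 for every n ≥ 0. -/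
open Polynomial

theorem newton_iterates_nilpotent_difference
    {k : Type*} [Field k] {A : Type*} [Ring A] [Algebra k A]
    (u : A) (r : ℕ) (hr : 0 < r) (pf : Fin r → k[X]) (mexp : Fin r → ℕ)
    (hmon : ∀ i, (pf i).Monic) (hirr : ∀ i, Irreducible (pf i))
    (hsep : ∀ i, (pf i).Separable)
    (hdist : ∀ i j, i ≠ j → pf i ≠ pf j)
    (hm1 : ∀ i, 1 ≤ mexp i)
    (p ptilde pbar : k[X])
    (hp : p = ∏ i, pf i ^ mexp i)
    (hpt : ptilde = ∏ i, pf i)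
    (hpb : p = ptilde * pbar)
    (hann : aeval u p = 0)
    (q : k[X]) (hq : pbar ∣ q * derivative ptilde - 1)
    (m : ℕ) (hm : m = Finset.univ.sup mexp)
    (d : ℕ → A) (hd0 : d 0 = u)
    (hdrec : ∀ n, d (n + 1) = d n - aeval (d n) ptilde * aeval (d n) q) :
    ∀ n : ℕ, (u - d n) ^ m = 0 := by
  have hmle : ∀ i, mexp i ≤ m := fun i => hm ▸ Finset.le_sup (Finset.mem_univ i)
  obtain ⟨c0, hc0⟩ : ∃ c : k[X], ptilde ^ m = p * c := by
    refine ⟨∏ i, pf i ^ (m - mexp i), ?_⟩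
    rw [hpt, hp, ← Finset.prod_mul_distrib, ← Finset.prod_pow]
    refine Finset.prod_congr rfl fun i _ => ?_
    rw [← pow_add, Nat.add_sub_cancel' (hmle i)]
  have hpt0 : aeval u (ptilde ^ m) = 0 := by
    rw [hc0, map_mul, hann, zero_mul]
  have key : ∀ n, ∃ f : k[X], d n = aeval u f ∧ ptilde ∣ X - f := by
    intro n
    induction n with
    | zero => exact ⟨X, by simp [hd0], by simp⟩
    | succ n ih =>
      obtain ⟨f, hf, hdvd⟩ := ih
      have h1 : X - f ∣ ptilde - ptilde.comp f := by
        have h := sub_dvd_eval_sub X f (ptilde.map (C : k →+* k[X]))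
        rw [eval_map, eval_map] at h
        have e1 : eval₂ C X ptilde = ptilde := by
          rw [show eval₂ C X ptilde = ptilde.comp X from rfl, comp_X]
        have e2 : eval₂ C f ptilde = ptilde.comp f := rfl
        rwa [e1, e2] at h
      have h2 : ptilde ∣ ptilde.comp f := by
        have := dvd_sub (dvd_refl ptilde) (dvd_trans hdvd h1)
        simpa using this
      refine ⟨f - ptilde.comp f * q.comp f, ?_, ?_⟩
      · rw [hdrec, hf, map_sub, map_mul, aeval_comp, aeval_comp]
      · have : X - (f - ptilde.comp f * q.comp f) = (X - f) + ptilde.comp f * q.comp f := by ring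
        rw [this]
        exact dvd_add hdvd (Dvd.dvd.mul_right h2 _)
  intro n
  obtain ⟨f, hf, c, hc⟩ := key n
  have hud : u - d n = aeval u (X - f) := by rw [hf, map_sub, aeval_X]
  rw [hud, ← map_pow, hc, mul_pow, map_mul, hpt0, zero_mul]
end

section
/- Let k be a field of prime characteristic ℓ and let a ∈ k be such that b^ℓ ≠ a for every b ∈ k. Let A be a nontrivial unital associative k-algebra and let u ∈ A satisfy u^ℓ = a·1_A. Then u admits no Jordan–Chevalley decomposition: there exist no elements d, s ∈ A with d absolutely semisimple, s nilpotent, u = d + s and ds = sd. -/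
/-!
Let `p = X ^ ℓ - a`. It is irreducible because `a` has no `ℓ`-th root, and inseparable because
`p' = 0`, so it divides no separable polynomial and is coprime to every one of them. On the other
hand, if `u = d + s` with `s` nilpotent and commuting with `d`, then Frobenius kills `s`:
`d ^ ℓ ^ (n + 1) = u ^ ℓ ^ (n + 1) = a ^ ℓ ^ n` for large `n`, i.e. `p ^ ℓ ^ n = X ^ ℓ ^ (n + 1) - a ^ ℓ ^ n`
annihilates `d`. Two coprime polynomials cannot both annihilate an element of a nontrivial algebra.
-/

open Polynomial

theorem Commute.exists_add_pow_expChar_pow_eq_of_isNilpotent {R : Type*} [Semiring R] {p : ℕ}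
    [ExpChar R p] (hp : 1 < p) {d s : R} (h : Commute d s) (hs : IsNilpotent s) :
    ∃ n, (d + s) ^ p ^ n = d ^ p ^ n := by
  obtain ⟨n, hn⟩ := hs
  refine ⟨n, ?_⟩
  rw [add_pow_expChar_pow_of_commute p n h, pow_eq_zero_of_le (Nat.lt_pow_self hp).le hn, add_zero]

theorem Polynomial.X_pow_sub_C_pow_expChar_pow {R : Type*} [CommRing R] {p : ℕ} [ExpChar R p]
    (a : R) (n : ℕ) : (X ^ p - C a) ^ p ^ n = X ^ p ^ (n + 1) - C (a ^ p ^ n) := by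
  rw [sub_pow_expChar_pow, ← pow_mul, ← pow_succ', C_pow]

theorem Polynomial.Separable.not_dvd_of_derivative_eq_zero {R : Type*} [CommSemiring R]
    {f p : R[X]} (hf : f.Separable) (hp : ¬IsUnit p) (hp' : derivative p = 0) : ¬p ∣ f := by
  intro hpf
  have hsep : IsCoprime p 0 := hp' ▸ hf.of_dvd hpf
  exact hp (isCoprime_zero_right.mp hsep)

theorem no_jordan_chevalley_of_inseparable
    {k : Type*} [Field k] (ℓ : ℕ) (hℓ : ℓ.Prime) (hchar : CharP k ℓ)
    (a : k) (ha : ∀ b : k, b ^ ℓ ≠ a)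
    {A : Type*} [Ring A] [Nontrivial A] [Algebra k A]
    (u : A) (hu : u ^ ℓ = algebraMap k A a) :
    ¬ ∃ d s : A, AbsSemisimple k d ∧ IsNilpotent s ∧ u = d + s ∧ d * s = s * d := by
  rintro ⟨d, s, ⟨f, hf, hfd⟩, hs, rfl, hds⟩
  have : ExpChar k ℓ := ExpChar.prime hℓ
  have : CharP A ℓ := charP_of_injective_algebraMap (algebraMap k A).injective ℓ
  have : ExpChar A ℓ := ExpChar.prime hℓ
  obtain ⟨n, hn⟩ := Commute.exists_add_pow_expChar_pow_eq_of_isNilpotent hℓ.one_lt hds hs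
  have hirr : Irreducible (X ^ ℓ - C a) := X_pow_sub_C_irreducible_of_prime hℓ ha
  have hndvd : ¬(X ^ ℓ - C a) ∣ f :=
    hf.not_dvd_of_derivative_eq_zero hirr.not_isUnit (by simp [derivative_X_pow])
  have hcop : IsCoprime f ((X ^ ℓ - C a) ^ ℓ ^ n) :=
    ((hirr.coprime_iff_not_dvd.mpr hndvd).symm.pow_right)
  have hpd : aeval d ((X ^ ℓ - C a) ^ ℓ ^ n) = 0 := by
    rw [X_pow_sub_C_pow_expChar_pow, map_sub, aeval_X_pow, aeval_C, pow_succ, pow_mul, ← hn,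
      ← pow_mul, mul_comm, pow_mul, hu, map_pow, sub_self]
  exact (aeval_ne_zero_of_isCoprime hcop d).elim (· hfd) (· hpd)
end

section
/- Let k be a perfect field, n ≥ 1, and let U be an invertible n×n matrix over k. Then U can be written in a unique way as U = D·V where D is an invertible n×n matrix over k that is absolutely semisimple, V is a unipotent n×n matrix over k, and D·V = V·D. -/
open Polynomial

/- Over a perfect field, absolute semisimplicity of an endomorphism is ordinary semisimplicity,
so the additive Jordan–Chevalley decomposition `f = n + s` is available. If `f` is a unit, so is
`s = f - n`, and `f = s (1 + s⁻¹ n)` with `1 + s⁻¹ n` unipotent. Conversely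
`s u = s (u - 1) + s` turns a multiplicative decomposition into an additive one, so uniqueness
of the additive decomposition gives uniqueness of the multiplicative one. -/

def IsMulJordanDecomposition (k : Type*) [Field k] {A : Type*} [Ring A] [Algebra k A]
    (f s u : A) : Prop :=
  IsUnit s ∧ AbsSemisimple k s ∧ IsNilpotent (1 - u) ∧ Commute s u ∧ f = s * u

section Ring

variable {R : Type*} [Ring R]

theorem Commute.isNilpotent_mul_sub_one {s u : R} (h : Commute s u) (hu : IsNilpotent (1 - u)) :
    IsNilpotent (s * (u - 1)) :=
  (h.sub_right (Commute.one_right s)).isNilpotent_mul_left (by simpa using hu.neg)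

theorem IsUnit.exists_mul_unipotent_of_nilpotent_add {n s : R} (hf : IsUnit (n + s))
    (hn : IsNilpotent n) (hns : Commute n s) :
    IsUnit s ∧ ∃ u, IsNilpotent (1 - u) ∧ Commute s u ∧ n + s = s * u := by
  have hs : IsUnit s := by
    simpa using hn.neg.isUnit_add_left_of_commute hf
      ((Commute.refl n).neg_left.add_right hns.neg_left)
  obtain ⟨s, rfl⟩ := hs
  have hsn : Commute (↑s⁻¹ : R) n := hns.symm.units_inv_left
  refine ⟨s.isUnit, 1 + ↑s⁻¹ * n, ?_, ?_, ?_⟩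
  · simpa using (hsn.isNilpotent_mul_left hn).neg
  · exact (Commute.one_right _).add_right ((Commute.refl _).units_inv_right.mul_right hns.symm)
  · rw [mul_add, mul_one, Units.mul_inv_cancel_left, add_comm]

end Ring

theorem absSemisimple_map_iff {k A B : Type*} [Field k] [Ring A] [Algebra k A] [Ring B]
    [Algebra k B] (e : A ≃ₐ[k] B) {a : A} : AbsSemisimple k (e a) ↔ AbsSemisimple k a := by
  simp only [AbsSemisimple, aeval_algHom_apply e, EmbeddingLike.map_eq_zero_iff]

theorem IsMulJordanDecomposition.map_iff {k A B : Type*} [Field k] [Ring A] [Algebra k A]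
    [Ring B] [Algebra k B] (e : A ≃ₐ[k] B) {f s u : A} :
    IsMulJordanDecomposition k (e f) (e s) (e u) ↔ IsMulJordanDecomposition k f s u := by
  simp only [IsMulJordanDecomposition, isUnit_map_iff, absSemisimple_map_iff,
    ← map_one e, ← map_sub, IsNilpotent.map_iff e.injective, Commute, SemiconjBy, ← map_mul,
    e.injective.eq_iff]

namespace Module.End

variable {K V : Type*} [Field K] [PerfectField K] [AddCommGroup V] [Module K V]
  [FiniteDimensional K V]

theorem absSemisimple_iff_isSemisimple {f : End K V} : AbsSemisimple K f ↔ f.IsSemisimple :=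
  ⟨fun ⟨_, hp, hf⟩ ↦ isSemisimple_of_squarefree_aeval_eq_zero hp.squarefree hf,
    fun hf ↦ ⟨minpoly K f, PerfectField.separable_iff_squarefree.2 hf.minpoly_squarefree,
      minpoly.aeval K f⟩⟩

theorem exists_isMulJordanDecomposition {f : End K V} (hf : IsUnit f) :
    ∃ s u, IsMulJordanDecomposition K f s u := by
  obtain ⟨n, hn, s, hs, hn_nil, hs_ss, rfl⟩ := f.exists_isNilpotent_isSemisimple
  have hns : Commute n s := Algebra.commute_of_mem_adjoin_singleton_of_commute hs
    (Algebra.commute_of_mem_adjoin_self hn).symm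
  obtain ⟨hs_unit, u, hu, hsu, h⟩ := hf.exists_mul_unipotent_of_nilpotent_add hn_nil hns
  exact ⟨s, u, hs_unit, absSemisimple_iff_isSemisimple.2 hs_ss, hu, hsu, h⟩

theorem isMulJordanDecomposition_unique {f s₁ u₁ s₂ u₂ : End K V}
    (h₁ : IsMulJordanDecomposition K f s₁ u₁)
    (h₂ : IsMulJordanDecomposition K f s₂ u₂) :
    s₁ = s₂ ∧ u₁ = u₂ := by
  obtain ⟨hs₁, ha₁, hu₁, hc₁, rfl⟩ := h₁
  obtain ⟨-, ha₂, hu₂, hc₂, h⟩ := h₂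
  have mul_eq_add : ∀ s u : End K V, s * u = s * (u - 1) + s := by
    intros; rw [mul_sub_one, sub_add_cancel]
  have commute_mul_sub_one {s u : End K V} (h : Commute s u) : Commute (s * (u - 1)) s :=
    (Commute.refl s).mul_left (h.sub_right (Commute.one_right s)).symm
  obtain rfl : s₁ = s₂ := (isNilpotent_isSemisimple_unique
    (hc₁.isNilpotent_mul_sub_one hu₁) (absSemisimple_iff_isSemisimple.1 ha₁)
    (hc₂.isNilpotent_mul_sub_one hu₂) (absSemisimple_iff_isSemisimple.1 ha₂)
    (commute_mul_sub_one hc₁) (commute_mul_sub_one hc₂)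
    (by rw [← mul_eq_add, ← mul_eq_add, h])).2
  exact ⟨rfl, hs₁.mul_left_cancel h⟩

end Module.End

theorem multiplicative_jordan_chevalley_general
    {k : Type*} [Field k] [PerfectField k] (n : ℕ)
    (U : Matrix (Fin n) (Fin n) k) (hU : IsUnit U) :
    ∃ D V : Matrix (Fin n) (Fin n) k,
      IsUnit D ∧ AbsSemisimple k D ∧ IsNilpotent (1 - V) ∧
      D * V = V * D ∧ U = D * V ∧
      ∀ D' V' : Matrix (Fin n) (Fin n) k,
        (IsUnit D' ∧ AbsSemisimple k D' ∧ IsNilpotent (1 - V') ∧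
          D' * V' = V' * D' ∧ U = D' * V') → D' = D ∧ V' = V := by
  let e := Matrix.toLinAlgEquiv' (R := k) (n := Fin n)
  obtain ⟨s, u, hsu⟩ := Module.End.exists_isMulJordanDecomposition (hU.map e)
  obtain ⟨hD, hD_ss, hV, hDV, hUDV⟩ :
      IsMulJordanDecomposition k U (e.symm s) (e.symm u) :=
    (IsMulJordanDecomposition.map_iff e).1 (by simpa using hsu)
  refine ⟨e.symm s, e.symm u, hD, hD_ss, hV, hDV, hUDV, fun D' V' h' ↦ ?_⟩
  obtain ⟨rfl, rfl⟩ :=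
    Module.End.isMulJordanDecomposition_unique ((IsMulJordanDecomposition.map_iff e).2 h') hsu
  simp

theorem multiplicative_jordan_chevalley
    {k : Type*} [Field k] [PerfectField k] (n : ℕ) (hn : 1 ≤ n)
    (U : Matrix (Fin n) (Fin n) k) (hU : IsUnit U) :
    ∃ D V : Matrix (Fin n) (Fin n) k,
      IsUnit D ∧ AbsSemisimple k D ∧ IsNilpotent (1 - V) ∧
      D * V = V * D ∧ U = D * V ∧
      ∀ D' V' : Matrix (Fin n) (Fin n) k,
        (IsUnit D' ∧ AbsSemisimple k D' ∧ IsNilpotent (1 - V') ∧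
          D' * V' = V' * D' ∧ U = D' * V') → D' = D ∧ V' = V :=
  multiplicative_jordan_chevalley_general n U hU
end

section
/- Let k be a field, let p̃ ∈ k[x] be a monic separable polynomial of degree s, let K be a splitting field of p̃ over k with λ_1, …, λ_s the (distinct) roots of p̃ in K, and let m ≥ 1 be an integer. Then there exists a polynomial h ∈ k[x] of degree strictly less than s·m such that, in K[x], (x − λ_j)^m divides h − λ_j for every j with 1 ≤ j ≤ s. -/
/-!
Newton's iteration in `k[X] ⧸ (p ^ m)`, started at the class of `X`, converges to a root of `p`
because `p(X)` is nilpotent there and `p'(X)` is a unit (separability). Lifting that root gives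
`h ∈ k[X]` with `p ^ m ∣ p ∘ h` and `h ≡ X` up to nilpotents, and reducing modulo `p ^ m` bounds
its degree. Over `K`, write `p = (X - λ) q` with `q(λ) ≠ 0`; then `p ∘ h = (h - λ) (q ∘ h)`, and
`q ∘ h` does not vanish at `λ` because `h(λ) = λ`, so `(X - λ) ^ m` divides `h - λ`.
-/

open Polynomial

theorem AdjoinRoot.exists_degree_lt_mk_eq {k : Type*} [Field k] {f : k[X]} (hf : f ≠ 0)
    (r : AdjoinRoot f) : ∃ g : k[X], g.degree < f.degree ∧ mk f g = r := by
  obtain ⟨g, rfl⟩ := mk_surjective r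
  refine ⟨g % f, degree_mod_lt g hf, mk_eq_mk.2 ?_⟩
  rw [EuclideanDomain.mod_eq_sub_mul_div, sub_sub_cancel_left, dvd_neg]
  exact dvd_mul_right f _

theorem Polynomial.Separable.exists_isNilpotent_root_sub_and_aeval_eq_zero {R : Type*}
    [CommRing R] {P : R[X]} (hP : P.Separable) (m : ℕ) :
    ∃ r : AdjoinRoot (P ^ m), IsNilpotent (AdjoinRoot.root (P ^ m) - r) ∧ aeval r P = 0 := by
  refine (existsUnique_nilpotent_sub_and_aeval_eq_zero ?_ ?_).exists
  · rw [AdjoinRoot.aeval_eq]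
    exact ⟨m, by rw [← map_pow, AdjoinRoot.mk_self]⟩
  · obtain ⟨a, b, hab⟩ := hP.pow_left (m := m)
    rw [AdjoinRoot.aeval_eq]
    refine IsUnit.of_mul_eq_one_right (AdjoinRoot.mk (P ^ m) b) ?_
    simpa [AdjoinRoot.mk_self] using congrArg (AdjoinRoot.mk (P ^ m)) hab

theorem Polynomial.Separable.exists_degree_lt_pow_dvd_comp_self {k : Type*} [Field k]
    {P : k[X]} (hP : P.Separable) (m : ℕ) :
    ∃ h : k[X], h.degree < (P ^ m).degree ∧ P ^ m ∣ P.comp h ∧ ∃ n, P ^ m ∣ (X - h) ^ n := by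
  obtain ⟨r, ⟨n, hn⟩, hr⟩ := hP.exists_isNilpotent_root_sub_and_aeval_eq_zero m
  obtain ⟨h, hdeg, rfl⟩ := AdjoinRoot.exists_degree_lt_mk_eq (pow_ne_zero m hP.ne_zero) r
  refine ⟨h, hdeg, ?_, n, ?_⟩
  · rw [← AdjoinRoot.mk_eq_zero, comp_eq_aeval]
    exact (aeval_algHom_apply (AdjoinRoot.mkₐ (P ^ m)) h P).symm.trans hr
  · rwa [← AdjoinRoot.mk_eq_zero, map_pow, map_sub, AdjoinRoot.mk_X]

theorem Polynomial.X_sub_C_pow_dvd_sub_C_of_pow_dvd_comp {K : Type*} [Field K] {P h : K[X]}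
    {a : K} {m : ℕ} (ha : P.IsRoot a) (hP' : P.derivative.eval a ≠ 0) (hfix : h.eval a = a)
    (hdvd : P ^ m ∣ P.comp h) : (X - C a) ^ m ∣ h - C a := by
  set Q := P /ₘ (X - C a)
  have hPQ : (X - C a) * Q = P := mul_divByMonic_eq_iff_isRoot.2 ha
  have hcop : IsCoprime (X - C a) (Q.comp h) := by
    rw [(prime_X_sub_C a).coprime_iff_not_dvd, dvd_iff_isRoot, IsRoot, eval_comp, hfix,
      ← IsRoot, ← dvd_iff_isRoot]
    exact fun hQ => not_isUnit_X_sub_C a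
      ((isCoprime_of_is_root_of_eval_derivative_ne_zero P a hP').isUnit_of_dvd' dvd_rfl hQ)
  refine hcop.pow_left.dvd_of_dvd_mul_right ?_
  calc (X - C a) ^ m ∣ P ^ m := pow_dvd_pow_of_dvd ⟨Q, hPQ.symm⟩ m
    _ ∣ P.comp h := hdvd
    _ = (h - C a) * Q.comp h := by rw [← hPQ, mul_comp, sub_comp, X_comp, C_comp]

theorem exists_congruence_solution_in_base_field_general
    {k K : Type*} [Field k] [Field K] [Algebra k K]
    (ptilde : k[X]) (hsep : ptilde.Separable)
    (s : ℕ) (hs : ptilde.natDegree = s)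
    (m : ℕ) (hm : 1 ≤ m) :
    ∃ h : k[X], h.degree < (s * m : ℕ) ∧
      ∀ lam : K, aeval lam ptilde = 0 →
        (X - C lam) ^ m ∣ h.map (algebraMap k K) - C lam := by
  obtain ⟨h, hdeg, hcomp, n, hnil⟩ := hsep.exists_degree_lt_pow_dvd_comp_self m
  refine ⟨h, ?_, fun a ha => ?_⟩
  · rwa [degree_eq_natDegree (pow_ne_zero m hsep.ne_zero), natDegree_pow, hs, mul_comm] at hdeg
  set A := algebraMap k K
  have hroot : (ptilde.map A).IsRoot a := by rwa [IsRoot, eval_map_algebraMap]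
  have hfix : (h.map A).eval a = a := by
    have hdvd : X - C a ∣ (X - h.map A) ^ n :=
      calc X - C a ∣ ptilde.map A := dvd_iff_isRoot.2 hroot
        _ ∣ ptilde.map A ^ m := dvd_pow_self _ (by omega)
        _ ∣ (X - h.map A) ^ n := by simpa using Polynomial.map_dvd A hnil
    have hroot_sub := dvd_iff_isRoot.1 ((prime_X_sub_C a).dvd_of_dvd_pow hdvd)
    rw [IsRoot, eval_sub, eval_X, sub_eq_zero] at hroot_sub
    exact hroot_sub.symm
  refine X_sub_C_pow_dvd_sub_C_of_pow_dvd_comp hroot ?_ hfix ?_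
  · rw [derivative_map, eval_map_algebraMap]
    exact hsep.aeval_derivative_ne_zero ha
  · simpa [Polynomial.map_comp] using Polynomial.map_dvd A hcomp

theorem exists_congruence_solution_in_base_field
    {k K : Type*} [Field k] [Field K] [Algebra k K]
    (ptilde : k[X]) (hmon : ptilde.Monic) (hsep : ptilde.Separable)
    (hsplit : IsSplittingField k K ptilde)
    (s : ℕ) (hs : ptilde.natDegree = s)
    (m : ℕ) (hm : 1 ≤ m) :
    ∃ h : k[X], h.degree < (s * m : ℕ) ∧
      ∀ lam : K, aeval lam ptilde = 0 →
        (X - C lam) ^ m ∣ h.map (algebraMap k K) - C lam :=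
  exists_congruence_solution_in_base_field_general ptilde hsep s hs m hm
end

section
/- Let k be a field, let p̃ ∈ k[x] be a monic separable polynomial with splitting field K over k, let m ≥ 1 and set p = p̃^m. Suppose h ∈ k[x] is such that, in K[x], (x − λ)^m divides h − λ for every root λ of p̃ in K. Then p̃ divides x − h in k[x], p divides (x − h)^m in k[x], and p divides p̃∘h (the composition p̃(h)) in k[x]. Consequently, for any unital associative k-algebra A and any u ∈ A with p(u) = 0, one has p̃(h(u)) = 0 and (u − h(u))^m = 0, so that (h(u), u − h(u)) is a Jordan–Chevalley decomposition of u. -/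
/-!
Over the splitting field `K` the separable polynomial `p̃` has simple roots `λ`, so `p̃ ^ m` divides
any `q ∈ k[X]` whose image in `K[X]` is divisible by every `(X - λ) ^ m`. The congruences
`h ≡ λ mod (X - λ) ^ m` give this for `q = X - h` (with exponent `1`) and for `q = p̃ ∘ h`, because
`h - λ` divides `p̃ ∘ h` whenever `p̃(λ) = 0`. Evaluating at `u` yields `p̃(h(u)) = 0` and
`(u - h(u)) ^ m = 0`, and `h(u)` commutes with `u`.
-/

open Polynomial

namespace Polynomial

theorem sub_C_dvd_comp_of_isRoot {R : Type*} [CommRing R] {f : R[X]} {a : R} (ha : f.IsRoot a)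
    (g : R[X]) : g - C a ∣ f.comp g := by
  obtain ⟨q, rfl⟩ := (dvd_iff_isRoot (p := f)).mpr ha
  exact ⟨q.comp g, by rw [mul_comp, sub_comp, X_comp, C_comp]⟩

variable {k K : Type*} [Field k] [Field K] [Algebra k K]

theorem pow_dvd_of_forall_X_sub_C_pow_dvd_map {f q : k[X]} (hsep : f.Separable)
    (hsplit : (f.map (algebraMap k K)).Splits) (m : ℕ)
    (hq : ∀ a : K, aeval a f = 0 → (X - C a) ^ m ∣ q.map (algebraMap k K)) : f ^ m ∣ q := by
  classical
  rcases eq_or_ne q 0 with rfl | hq0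
  · exact dvd_zero _
  rw [← map_dvd_map' (algebraMap k K), Polynomial.map_pow]
  refine (hsplit.pow m).dvd_of_roots_le_roots (pow_ne_zero m hsep.map.ne_zero) ?_
  rw [roots_pow, Multiset.le_iff_count]
  intro a
  rw [Multiset.count_nsmul]
  -- `f` has only simple roots, so only multiplicity `m` is demanded of `q` at each of them
  rcases Nat.le_one_iff_eq_zero_or_eq_one.mp
    (Multiset.nodup_iff_count_le_one.mp (nodup_roots (hsep.map (f := algebraMap k K))) a)
    with h0 | h1
  · rw [h0, mul_zero]
    exact Nat.zero_le _
  · have ha : aeval a f = 0 :=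
      (mem_aroots.mp (Multiset.count_pos.mp (by rw [h1]; exact Nat.one_pos))).2
    rw [h1, mul_one, count_roots, le_rootMultiplicity_iff (map_ne_zero hq0)]
    exact hq a ha

end Polynomial

theorem isJordanChevalley_aeval {k A : Type*} [Field k] [Ring A] [Algebra k A] {u : A}
    {f h : k[X]} (hf : f.Separable) (hd : aeval (aeval u h) f = 0)
    (hs : IsNilpotent (u - aeval u h)) : IsJordanChevalley k u (aeval u h) (u - aeval u h) := by
  have hcomm : Commute (aeval u h) u := by
    simpa using (Commute.all h X).map (aeval u)
  exact ⟨⟨f, hf, hd⟩, hs, (add_sub_cancel _ _).symm, (hcomm.sub_right (Commute.refl _)).eq⟩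

theorem congruence_solution_gives_jordan_chevalley_general
    {k K : Type*} [Field k] [Field K] [Algebra k K]
    (ptilde : k[X]) (hsep : ptilde.Separable)
    (hsplit : IsSplittingField k K ptilde)
    (m : ℕ) (hm : 1 ≤ m) (p : k[X]) (hp : p = ptilde ^ m)
    (h : k[X])
    (hcong : ∀ lam : K, aeval lam ptilde = 0 →
      (X - C lam) ^ m ∣ h.map (algebraMap k K) - C lam) :
    ptilde ∣ (X - h) ∧ p ∣ (X - h) ^ m ∧ p ∣ ptilde.comp h ∧
    ∀ (A : Type*) [Ring A] [Algebra k A] (u : A), aeval u p = 0 →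
      aeval (aeval u h) ptilde = 0 ∧ (u - aeval u h) ^ m = 0 ∧
      IsJordanChevalley k u (aeval u h) (u - aeval u h) := by
  have hdiv_X_sub : ptilde ∣ X - h := by
    refine pow_one ptilde ▸ pow_dvd_of_forall_X_sub_C_pow_dvd_map hsep hsplit.splits' 1
      fun lam hlam => ?_
    have hlin : X - C lam ∣ h.map (algebraMap k K) - C lam :=
      (dvd_pow_self _ (Nat.one_le_iff_ne_zero.mp hm)).trans (hcong lam hlam)
    simpa using (dvd_refl (X - C lam)).sub hlin
  have hdiv_pow : p ∣ (X - h) ^ m := hp ▸ pow_dvd_pow_of_dvd hdiv_X_sub m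
  have hdiv_comp : p ∣ ptilde.comp h := by
    refine hp ▸ pow_dvd_of_forall_X_sub_C_pow_dvd_map hsep hsplit.splits' m fun lam hlam => ?_
    rw [map_comp]
    refine (hcong lam hlam).trans (sub_C_dvd_comp_of_isRoot ?_ _)
    rwa [IsRoot, eval_map_algebraMap]
  refine ⟨hdiv_X_sub, hdiv_pow, hdiv_comp, fun A _ _ u hu => ?_⟩
  have hd : aeval (aeval u h) ptilde = 0 := by
    rw [← aeval_comp]
    exact aeval_eq_zero_of_dvd_aeval_eq_zero hdiv_comp hu
  have hs : (u - aeval u h) ^ m = 0 := by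
    simpa using aeval_eq_zero_of_dvd_aeval_eq_zero hdiv_pow hu
  exact ⟨hd, hs, isJordanChevalley_aeval hsep hd ⟨m, hs⟩⟩

theorem congruence_solution_gives_jordan_chevalley
    {k K : Type*} [Field k] [Field K] [Algebra k K]
    (ptilde : k[X]) (hmon : ptilde.Monic) (hsep : ptilde.Separable)
    (hsplit : IsSplittingField k K ptilde)
    (m : ℕ) (hm : 1 ≤ m) (p : k[X]) (hp : p = ptilde ^ m)
    (h : k[X])
    (hcong : ∀ lam : K, aeval lam ptilde = 0 →
      (X - C lam) ^ m ∣ h.map (algebraMap k K) - C lam) :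
    ptilde ∣ (X - h) ∧ p ∣ (X - h) ^ m ∧ p ∣ ptilde.comp h ∧
    ∀ (A : Type*) [Ring A] [Algebra k A] (u : A), aeval u p = 0 →
      aeval (aeval u h) ptilde = 0 ∧ (u - aeval u h) ^ m = 0 ∧
      IsJordanChevalley k u (aeval u h) (u - aeval u h) :=
  congruence_solution_gives_jordan_chevalley_general ptilde hsep hsplit m hm p hp h hcong
end

section
/- Let k be a field and let p = p_1^{m_1}···p_r^{m_r} ∈ k[x] be monic with pairwise distinct monic irreducible separable factors p_1, …, p_r; set p̃ = p_1···p_r, p̄ = p/p̃ and m = max_j m_j, and let q ∈ k[x] satisfy q·p̃' ≡ 1 (mod p̄). Define a sequence of polynomials by h_0 = x and h_{n+1} = the remainder of the Euclidean division of h_n − (p̃∘h_n)·(q∘h_n) by p. Let K be a splitting field of p̃ over k and let N be the smallest integer with 2^N ≥ m. Then: (i) h_n(λ) = λ for every root λ of p̃ in K and every n ≥ 0; (ii) p divides p̃∘h_N in k[x]; and (iii) for every root λ of p̃ in K, (x − λ)^{n_λ} divides h_N − λ in K[x], where n_λ is the multiplicity of λ as a root of p. -/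
/-!
Newton's iteration `h ↦ h - p̃(h) q(h)` fixes every root of `p̃` and converges quadratically: for
each irreducible factor `f` of `p̃`, write `p̃ = f g`; a Taylor expansion of `f(h - p̃(h) q(h))`
around `h`, together with `q p̃' ≡ 1 (mod p̄)`, shows that if `f^a ∣ f ∘ h` then
`f^min(2a, e) ∣ f ∘ h'`, where `f^e` is the exact power of `f` in `p` (reduction mod `p` does not
disturb this). After `N` steps `f^e ∣ f ∘ h_N ∣ p̃ ∘ h_N` for every factor, whence `p ∣ p̃ ∘ h_N`
by coprimality. Over `K`, write `p̃ = (X - λ) s` with `s(λ) ≠ 0` (separability); then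
`p̃ ∘ h_N = (h_N - λ)(s ∘ h_N)` and `s ∘ h_N` does not vanish at `λ` since `h_N(λ) = λ`, so the
`(X - λ)`-part of `p` divides `h_N - λ`.
-/

open Polynomial

namespace Polynomial

section CommRing

variable {R : Type*} [CommRing R]

theorem exists_comp_add_eq (f a b : R[X]) :
    ∃ c : R[X], f.comp (a + b) = f.comp a + (derivative f).comp a * b + c * b ^ 2 := by
  obtain ⟨c, hc⟩ := binomExpansion (f.map C) a b
  exact ⟨c, by simpa [eval_map, derivative_map, comp, eval₂_map] using hc⟩

theorem comp_dvd_comp {a b : R[X]} (t : R[X]) (hab : a ∣ b) : a.comp t ∣ b.comp t :=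
  _root_.map_dvd (compRingHom t) hab

/-- Quadratic convergence of Newton's method: the exponent `a` doubles, capped at `e`. -/
theorem pow_min_dvd_comp_newton_step {f g pbar q t s : R[X]} {a e : ℕ}
    (hq : pbar ∣ q * derivative (f * g) - 1) (hpbar : f ^ e ∣ f * pbar) (ha : 1 ≤ a)
    (hae : a ≤ e) (hft : f ^ a ∣ f.comp t) :
    f ^ min (2 * a) e ∣ f.comp (t - (f * g).comp t * q.comp t + f * g * pbar * s) := by
  obtain ⟨u, hu⟩ := hq
  set F := f.comp t
  set δ := -((f * g).comp t * q.comp t) + f * g * pbar * s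
  obtain ⟨c, hc⟩ := exists_comp_add_eq f t δ
  -- Since `q (f g)' ≡ 1 (mod pbar)`, the first-order terms of the Taylor expansion cancel.
  have hexpand : f.comp (t - (f * g).comp t * q.comp t + f * g * pbar * s) =
      -(F * pbar.comp t * u.comp t) + F ^ 2 * ((derivative g).comp t * q.comp t)
        + (derivative f).comp t * (f * pbar) * g * s + c * δ ^ 2 := by
    have hu' := congrArg (·.comp t) hu
    rw [show t - (f * g).comp t * q.comp t + f * g * pbar * s = t + δ by ring, hc]
    simp only [δ, F, sub_comp, mul_comp, add_comp, one_comp, derivative_mul] at hu' ⊢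
    linear_combination (-F) * hu'
  have hfF : f ∣ F := (dvd_pow_self f (by omega)).trans hft
  have hfδ : f ^ a ∣ δ := by
    rw [show δ = -(F * (g.comp t * q.comp t)) + f * pbar * (g * s) by
      simp only [δ, F, mul_comp]; ring]
    exact dvd_add (dvd_neg.mpr (hft.mul_right _)) (((pow_dvd_pow f hae).trans hpbar).mul_right _)
  have hde : f ^ min (2 * a) e ∣ f ^ e := pow_dvd_pow f (min_le_right _ _)
  have hd2a : ∀ {x}, f ^ a ∣ x → f ^ min (2 * a) e ∣ x ^ 2 := fun hx =>
    (pow_dvd_pow f (min_le_left _ _)).trans (by rw [pow_mul']; exact pow_dvd_pow_of_dvd hx 2)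
  have hFpbar : f ^ e ∣ F * pbar.comp t :=
    (pow_dvd_pow_of_dvd hfF e).trans <| by
      simpa only [F, mul_comp, pow_comp] using comp_dvd_comp t hpbar
  rw [hexpand]
  refine dvd_add (dvd_add (dvd_add (dvd_neg.mpr ?_) ?_) ?_) ?_
  · exact (hde.trans hFpbar).mul_right _
  · exact (hd2a hft).mul_right _
  · exact ((hde.trans hpbar).mul_left _).mul_right _ |>.mul_right _
  · exact (hd2a hfδ).mul_left _

/-- Newton's iteration for a root of `pt` started at `X`, with `q` in the role of `1 / pt'`,
computed modulo `p`. -/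
def IsNewtonSeq (pt q p : R[X]) (h : ℕ → R[X]) : Prop :=
  h 0 = X ∧ ∀ n, ∃ s, h (n + 1) = h n - pt.comp (h n) * q.comp (h n) + p * s

theorem IsNewtonSeq.aeval_eq {A : Type*} [CommRing A] [Algebra R A] {pt q p : R[X]}
    {h : ℕ → R[X]} (hh : IsNewtonSeq pt q p h) {x : A} (hpt : aeval x pt = 0)
    (hp : aeval x p = 0) (n : ℕ) : aeval x (h n) = x := by
  induction n with
  | zero => rw [hh.1, aeval_X]
  | succ n ih =>
    obtain ⟨s, hs⟩ := hh.2 n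
    simp only [hs, map_add, map_sub, map_mul, aeval_comp, ih, hpt, hp, zero_mul, sub_zero,
      add_zero]

theorem IsNewtonSeq.pow_min_two_pow_dvd_comp {f g pbar q : R[X]} {h : ℕ → R[X]} {e : ℕ}
    (hh : IsNewtonSeq (f * g) q (f * g * pbar) h) (he : 1 ≤ e)
    (hq : pbar ∣ q * derivative (f * g) - 1) (hpbar : f ^ e ∣ f * pbar) (n : ℕ) :
    f ^ min (2 ^ n) e ∣ f.comp (h n) := by
  induction n with
  | zero => rw [hh.1, comp_X, pow_zero, min_eq_left he, pow_one]
  | succ n ih =>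
    obtain ⟨s, hs⟩ := hh.2 n
    rw [hs, show min (2 ^ (n + 1)) e = min (2 * min (2 ^ n) e) e by rw [pow_succ]; omega]
    exact pow_min_dvd_comp_newton_step hq hpbar (le_min Nat.one_le_two_pow he)
      (min_le_right _ _) ih

theorem pow_dvd_mul_of_pow_dvd_mul_mul {f g d : R} {e : ℕ} (hfg : IsCoprime f g)
    (h : f ^ e ∣ f * g * d) : f ^ e ∣ f * d :=
  hfg.pow_left.dvd_of_dvd_mul_left (by rwa [mul_left_comm, ← mul_assoc])

theorem exists_prod_eq_mul_isCoprime {ι : Type*} [Fintype ι] [DecidableEq ι] {f : ι → R}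
    (hf : Pairwise fun i j => IsCoprime (f i) (f j)) (i : ι) :
    ∃ g, ∏ j, f j = f i * g ∧ IsCoprime (f i) g :=
  ⟨∏ j ∈ Finset.univ.erase i, f j, (Finset.mul_prod_erase _ _ (Finset.mem_univ i)).symm,
    IsCoprime.prod_right fun _ hj => hf (Finset.ne_of_mem_erase hj).symm⟩

end CommRing

theorem isCoprime_of_monic_of_irreducible_of_ne {K : Type*} [Field K] {f g : K[X]}
    (hf : f.Monic) (hg : g.Monic) (hfi : Irreducible f) (hgi : Irreducible g) (hfg : f ≠ g) :
    IsCoprime f g :=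
  hfi.coprime_iff_not_dvd.2 fun hdvd =>
    hfg (eq_of_monic_of_associated hf hg (hfi.associated_of_dvd hgi hdvd))

theorem pow_rootMultiplicity_dvd_sub_C_of_dvd_comp {R : Type*} [CommRing R] [IsDomain R]
    {P Q H : R[X]} {x : R} (hP : Squarefree P) (hx : P.IsRoot x) (hH : H.eval x = x)
    (hQ : Q ∣ P.comp H) : (X - C x) ^ Q.rootMultiplicity x ∣ H - C x := by
  set s := P /ₘ (X - C x)
  have hPs : (X - C x) * s = P := mul_divByMonic_eq_iff_isRoot.2 hx
  have hs : ¬ s.IsRoot x := fun hsx =>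
    not_isUnit_X_sub_C x <| hP _ <| by
      rw [← hPs, ← mul_divByMonic_eq_iff_isRoot.2 hsx]
      exact mul_dvd_mul_left _ (dvd_mul_right _ _)
  have hcomp : P.comp H = (H - C x) * s.comp H := by
    rw [← hPs, mul_comp, sub_comp, X_comp, C_comp]
  refine (prime_X_sub_C x).pow_dvd_of_dvd_mul_right _ (fun hdvd => hs ?_)
    ((pow_rootMultiplicity_dvd Q x).trans (hcomp ▸ hQ))
  simpa only [IsRoot, eval_comp, hH] using dvd_iff_isRoot.1 hdvd

end Polynomial

theorem newton_polynomial_solves_congruences_general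
    {k K : Type*} [Field k] [Field K] [Algebra k K]
    (r : ℕ) (pf : Fin r → k[X]) (mexp : Fin r → ℕ)
    (hmon : ∀ i, (pf i).Monic) (hirr : ∀ i, Irreducible (pf i))
    (hsep : ∀ i, (pf i).Separable)
    (hdist : ∀ i j, i ≠ j → pf i ≠ pf j)
    (hm1 : ∀ i, 1 ≤ mexp i)
    (p ptilde pbar : k[X])
    (hp : p = ∏ i, pf i ^ mexp i)
    (hpt : ptilde = ∏ i, pf i)
    (hpb : p = ptilde * pbar)
    (q : k[X]) (hq : pbar ∣ q * derivative ptilde - 1)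
    (m : ℕ) (hm : m = Finset.univ.sup mexp)
    (N : ℕ) (hN1 : m ≤ 2 ^ N)
    (h : ℕ → k[X]) (hh0 : h 0 = X)
    (hhrec : ∀ n, h (n + 1) = (h n - (ptilde.comp (h n)) * (q.comp (h n))) %ₘ p) :
    (∀ n : ℕ, ∀ lam : K, aeval lam ptilde = 0 → aeval lam (h n) = lam) ∧
    p ∣ ptilde.comp (h N) ∧
    (∀ lam : K, aeval lam ptilde = 0 →
      (X - C lam) ^ (rootMultiplicity lam (p.map (algebraMap k K))) ∣
        (h N).map (algebraMap k K) - C lam) := by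
  have hcop : Pairwise fun i j => IsCoprime (pf i) (pf j) := fun i j hij =>
    isCoprime_of_monic_of_irreducible_of_ne (hmon i) (hmon j) (hirr i) (hirr j) (hdist i j hij)
  have hseq : IsNewtonSeq ptilde q p h := ⟨hh0, fun n =>
    ⟨-((h n - ptilde.comp (h n) * q.comp (h n)) /ₘ p), by
      rw [hhrec, modByMonic_eq_sub_mul_div]; ring⟩⟩
  have hfix : ∀ n (lam : K), aeval lam ptilde = 0 → aeval lam (h n) = lam := fun n lam hlam =>
    hseq.aeval_eq hlam (by rw [hpb, map_mul, hlam, zero_mul]) n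
  have hfactor : ∀ i, pf i ^ mexp i ∣ (pf i).comp (h N) := by
    intro i
    obtain ⟨g, hg, hcopg⟩ := exists_prod_eq_mul_isCoprime hcop i
    rw [← hpt] at hg
    rw [hpb, hg] at hseq hp
    have hpbar : pf i ^ mexp i ∣ pf i * pbar :=
      pow_dvd_mul_of_pow_dvd_mul_mul hcopg (hp ▸ Finset.dvd_prod_of_mem _ (Finset.mem_univ i))
    have hiter := hseq.pow_min_two_pow_dvd_comp (hm1 i) (hg ▸ hq) hpbar N
    rwa [min_eq_right ((hm ▸ Finset.le_sup (Finset.mem_univ i)).trans hN1)] at hiter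
  have hdvd : p ∣ ptilde.comp (h N) := hp ▸ Finset.prod_dvd_of_coprime
    (fun i _ j _ hij => (hcop hij).pow) fun i _ => (hfactor i).trans
      (comp_dvd_comp _ (hpt ▸ Finset.dvd_prod_of_mem _ (Finset.mem_univ i)))
  refine ⟨hfix, hdvd, fun lam hlam => ?_⟩
  have hsq : Squarefree (ptilde.map (algebraMap k K)) :=
    (hpt ▸ separable_prod hcop hsep).map.squarefree
  refine pow_rootMultiplicity_dvd_sub_C_of_dvd_comp hsq ?_ ?_ ?_
  · rwa [IsRoot, eval_map_algebraMap]
  · rw [eval_map_algebraMap]; exact hfix N lam hlam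
  · rw [← map_comp]; exact Polynomial.map_dvd _ hdvd

theorem newton_polynomial_solves_congruences
    {k K : Type*} [Field k] [Field K] [Algebra k K]
    (r : ℕ) (hr : 0 < r) (pf : Fin r → k[X]) (mexp : Fin r → ℕ)
    (hmon : ∀ i, (pf i).Monic) (hirr : ∀ i, Irreducible (pf i))
    (hsep : ∀ i, (pf i).Separable)
    (hdist : ∀ i j, i ≠ j → pf i ≠ pf j)
    (hm1 : ∀ i, 1 ≤ mexp i)
    (p ptilde pbar : k[X])
    (hp : p = ∏ i, pf i ^ mexp i)
    (hpt : ptilde = ∏ i, pf i)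
    (hpb : p = ptilde * pbar)
    (q : k[X]) (hq : pbar ∣ q * derivative ptilde - 1)
    (m : ℕ) (hm : m = Finset.univ.sup mexp)
    (hsplit : IsSplittingField k K ptilde)
    (N : ℕ) (hN1 : m ≤ 2 ^ N) (hN2 : ∀ M, m ≤ 2 ^ M → N ≤ M)
    (h : ℕ → k[X]) (hh0 : h 0 = X)
    (hhrec : ∀ n, h (n + 1) = (h n - (ptilde.comp (h n)) * (q.comp (h n))) %ₘ p) :
    (∀ n : ℕ, ∀ lam : K, aeval lam ptilde = 0 → aeval lam (h n) = lam) ∧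
    p ∣ ptilde.comp (h N) ∧
    (∀ lam : K, aeval lam ptilde = 0 →
      (X - C lam) ^ (rootMultiplicity lam (p.map (algebraMap k K))) ∣
        (h N).map (algebraMap k K) - C lam) :=
  newton_polynomial_solves_congruences_general r pf mexp hmon hirr hsep hdist hm1 p ptilde pbar hp
    hpt hpb q hq m hm N hN1 h hh0 hhrec
end
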